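/- For any real t > 0 and any nonnegative integer n, the Jensen polynomial J_n(x) = Σ_{k=0}^n C(n,k) · x^k / (t)_k has only real zeros, all of which are nonpositive. -/
import Mathlib


open scoped Nat

noncomputable def rf (t : ℝ) : ℕ → ℝ
  | 0 => 1
  | n + 1 => rf t n * (t + n)

open Polynomial Finset

lemma rf_pos {t : ℝ} (ht : 0 < t) : ∀ k, 0 < rf t k
  | 0 => one_pos
  | (k + 1) => mul_pos (rf_pos ht k) (by positivity)

lemma rf_succ_left (v : ℝ) : ∀ m, rf v (m + 1) = v * rf (v + 1) m
  | 0 => by simp [rf]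
  | (m + 1) => by
      have h := rf_succ_left v m
      show rf v (m + 1) * (v + (m + 1 : ℕ)) = v * (rf (v + 1) m * ((v + 1) + (m : ℕ)))
      rw [h]; push_cast; ring

lemma rf_add (t : ℝ) (k : ℕ) : ∀ m, rf t (k + m) = rf t k * rf (t + k) m
  | 0 => by simp [rf]
  | (m + 1) => by
      show rf t (k + m) * (t + (k + m : ℕ)) = rf t k * (rf (t + k) m * ((t + k) + (m : ℕ)))
      rw [rf_add t k m]; push_cast; ring

noncomputable def Q : ℕ → ℝ → Polynomial ℝ
  | 0, _ => 1
  | (j + 1), u => (C u - X) * Q j (u + 1) + X * derivative (Q j (u + 1))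

lemma coeff_Q : ∀ (j : ℕ) (u : ℝ) (k : ℕ),
    (Q j u).coeff k = (j.choose k : ℝ) * rf (u + k) (j - k) * (-1) ^ k
  | 0, u, k => by
      cases k with
      | zero => simp [Q, rf]
      | succ k => simp [Q, Nat.choose, coeff_one]
  | (j + 1), u, k => by
      have ih := coeff_Q j (u + 1)
      show ((C u - X) * Q j (u + 1) + X * derivative (Q j (u + 1))).coeff k = _
      rw [sub_mul, coeff_add, coeff_sub, coeff_C_mul]
      cases k with
      | zero =>
          rw [mul_coeff_zero, mul_coeff_zero, coeff_X_zero, zero_mul, zero_mul, sub_zero,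
            add_zero, ih]
          rw [Nat.choose_zero_right, Nat.choose_zero_right]
          simp only [Nat.cast_zero, add_zero, Nat.sub_zero, pow_zero, Nat.cast_one]
          rw [rf_succ_left]
          ring
      | succ k =>
          rw [coeff_X_mul, coeff_X_mul, coeff_derivative, ih, ih]
          rcases lt_or_ge k j with h | h
          · have h1 : j - k = (j - (k + 1)) + 1 := by omega
            have h2 : (j + 1) - (k + 1) = (j - (k + 1)) + 1 := by omega
            have h3 : ((j + 1).choose (k + 1) : ℝ) = j.choose k + j.choose (k + 1) := by
              rw [Nat.choose_succ_succ]; push_cast; ring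
            rw [h1, h2, rf_succ_left, rf_succ_left, h3]
            push_cast
            ring_nf
          · have h1 : j - k = 0 := by omega
            have h2 : j - (k + 1) = 0 := by omega
            have h3 : (j + 1) - (k + 1) = 0 := by omega
            have h4 : j.choose (k + 1) = 0 := Nat.choose_eq_zero_of_lt (by omega)
            have h5 : (j + 1).choose (k + 1) = j.choose k := by
              rw [Nat.choose_succ_succ, h4, Nat.add_zero]
            rw [h1, h2, h3, h4, h5]
            simp only [rf, Nat.cast_zero, zero_mul, mul_one]
            ring

lemma natDegree_Q_le (j : ℕ) (u : ℝ) : (Q j u).natDegree ≤ j := by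
  rw [Polynomial.natDegree_le_iff_coeff_eq_zero]
  intro m hm
  rw [coeff_Q, Nat.choose_eq_zero_of_lt hm]
  simp

lemma step (j : ℕ) (c : ℝ) (hc : 0 < c) (r : Fin j → ℝ) (hr : StrictMono r)
    (hrp : ∀ i, 0 < r i) :
    ∃ s : Fin (j + 1) → ℝ, StrictMono s ∧ (∀ i, 0 < s i) ∧
      (C c - X) * (∏ i, (X - C (r i))) + X * derivative (∏ i, (X - C (r i)))
        = -(∏ i, (X - C (s i))) := by
  classical
  set P : Polynomial ℝ := ∏ i, (X - C (r i)) with hP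
  have hPmonic : P.Monic := monic_prod_of_monic _ _ fun i _ => monic_X_sub_C _
  have hPdeg : P.natDegree = j := by
    rw [hP, natDegree_prod_of_monic _ _ fun i _ => monic_X_sub_C _]
    simp
  set q : Polynomial ℝ := (C c - X) * P + X * derivative P with hq
  have hcoeff : q.coeff (j + 1) = -1 := by
    have h1 : P.coeff (j + 1) = 0 := coeff_eq_zero_of_natDegree_lt (by omega)
    have h2 : P.coeff j = 1 := by
      rw [← hPdeg]; exact hPmonic.coeff_natDegree
    rw [hq, sub_mul, coeff_add, coeff_sub, coeff_C_mul, coeff_X_mul, coeff_X_mul,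
      coeff_derivative, h1, h2]
    ring
  have hqdeg_le : q.natDegree ≤ j + 1 := by
    refine le_trans (natDegree_add_le _ _) (max_le ?_ ?_)
    · refine le_trans (natDegree_mul_le) ?_
      have hx : (C c - X).natDegree ≤ 1 := by
        refine le_trans (natDegree_sub_le _ _) ?_
        simp [natDegree_C, natDegree_X]
      omega
    · refine le_trans (natDegree_mul_le) ?_
      have hd := natDegree_derivative_le P
      have hx : (X : Polynomial ℝ).natDegree = 1 := natDegree_X
      omega
  have hqdeg : q.natDegree = j + 1 :=
    le_antisymm hqdeg_le (le_natDegree_of_ne_zero (by rw [hcoeff]; norm_num))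
  have hqne : q ≠ 0 := fun h => by simp [h] at hcoeff
  have hmonic : (-q).Monic := by
    unfold Polynomial.Monic
    rw [Polynomial.leadingCoeff, natDegree_neg, hqdeg, coeff_neg, hcoeff]
    norm_num
  -- evaluations
  have hevalP : ∀ x : ℝ, P.eval x = ∏ i, (x - r i) := by
    intro x; rw [hP, eval_prod]; simp
  have hevalq : ∀ x : ℝ, q.eval x = (c - x) * P.eval x + x * (derivative P).eval x := by
    intro x; rw [hq]; simp
  -- eval at r k
  have hevalrk : ∀ k : Fin j, q.eval (r k)
      = r k * ∏ a ∈ Finset.univ.erase k, (r k - r a) := by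
    intro k
    have hsplit : P = (X - C (r k)) * ∏ a ∈ Finset.univ.erase k, (X - C (r a)) :=
      (Finset.mul_prod_erase _ _ (Finset.mem_univ k)).symm
    have hder : (derivative P).eval (r k) = ∏ a ∈ Finset.univ.erase k, (r k - r a) := by
      rw [hsplit, derivative_mul]
      simp [eval_prod]
    have hPrk : P.eval (r k) = 0 := by
      rw [hevalP]
      exact Finset.prod_eq_zero (Finset.mem_univ k) (by ring)
    rw [hevalq, hPrk, hder]
    ring
  -- sign at r k
  have hsignrk : ∀ k : Fin j, 0 < (-1 : ℝ) ^ (j + (k : ℕ) + 1) * q.eval (r k) := by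
    intro k
    rw [hevalrk]
    have herase : Finset.univ.erase k = Finset.Iio k ∪ Finset.Ioi k := by
      ext a
      simp only [Finset.mem_erase, Finset.mem_univ, and_true, Finset.mem_union,
        Finset.mem_Iio, Finset.mem_Ioi]
      exact ne_iff_lt_or_gt
    have hdisj : Disjoint (Finset.Iio k) (Finset.Ioi k) := by
      rw [Finset.disjoint_left]
      intro a ha hb
      exact absurd (lt_trans (Finset.mem_Iio.1 ha) (Finset.mem_Ioi.1 hb)) (lt_irrefl _)
    rw [herase, Finset.prod_union hdisj]
    have h1 : 0 < ∏ a ∈ Finset.Iio k, (r k - r a) :=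
      Finset.prod_pos fun a ha => sub_pos.2 (hr (Finset.mem_Iio.1 ha))
    have h2 : ∏ a ∈ Finset.Ioi k, (r k - r a)
        = (-1 : ℝ) ^ (j - 1 - (k : ℕ)) * ∏ a ∈ Finset.Ioi k, (r a - r k) := by
      rw [← Fin.card_Ioi k]
      calc ∏ a ∈ Finset.Ioi k, (r k - r a)
          = ∏ a ∈ Finset.Ioi k, ((-1) * (r a - r k)) := by
            apply Finset.prod_congr rfl; intro a _; ring
        _ = (-1 : ℝ) ^ (Finset.Ioi k).card * ∏ a ∈ Finset.Ioi k, (r a - r k) := by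
            rw [Finset.prod_mul_distrib, Finset.prod_const]
    have h3 : 0 < ∏ a ∈ Finset.Ioi k, (r a - r k) :=
      Finset.prod_pos fun a ha => sub_pos.2 (hr (Finset.mem_Ioi.1 ha))
    rw [h2]
    have hpar : (-1 : ℝ) ^ (j + (k : ℕ) + 1) * (r k
        * ((∏ a ∈ Finset.Iio k, (r k - r a))
          * ((-1 : ℝ) ^ (j - 1 - (k : ℕ)) * ∏ a ∈ Finset.Ioi k, (r a - r k))))
        = (r k * ((∏ a ∈ Finset.Iio k, (r k - r a)) * (∏ a ∈ Finset.Ioi k, (r a - r k)))) := by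
      have hk : (k : ℕ) < j := k.isLt
      have : (-1 : ℝ) ^ (j + (k : ℕ) + 1) * (-1 : ℝ) ^ (j - 1 - (k : ℕ)) = 1 := by
        rw [← pow_add, show j + (k : ℕ) + 1 + (j - 1 - (k : ℕ)) = 2 * j by omega, pow_mul]
        norm_num
      calc (-1 : ℝ) ^ (j + (k : ℕ) + 1) * (r k
          * ((∏ a ∈ Finset.Iio k, (r k - r a))
            * ((-1 : ℝ) ^ (j - 1 - (k : ℕ)) * ∏ a ∈ Finset.Ioi k, (r a - r k))))
          = ((-1 : ℝ) ^ (j + (k : ℕ) + 1) * (-1 : ℝ) ^ (j - 1 - (k : ℕ))) * (r k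
            * ((∏ a ∈ Finset.Iio k, (r k - r a)) * (∏ a ∈ Finset.Ioi k, (r a - r k)))) := by
              ring
        _ = _ := by rw [this, one_mul]
    rw [hpar]
    exact mul_pos (hrp k) (mul_pos h1 h3)
  -- sign at 0
  have hsign0 : 0 < (-1 : ℝ) ^ j * q.eval 0 := by
    have h0 : q.eval 0 = c * ((-1 : ℝ) ^ j * ∏ i, r i) := by
      rw [hevalq, hevalP]
      have : ∏ i : Fin j, ((0 : ℝ) - r i) = ∏ i : Fin j, ((-1) * r i) := by
        apply Finset.prod_congr rfl; intro a _; ring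
      rw [this, Finset.prod_mul_distrib, Finset.prod_const, Finset.card_univ,
        Fintype.card_fin]
      ring
    rw [h0]
    have hprod : 0 < ∏ i : Fin j, r i := Finset.prod_pos fun i _ => hrp i
    have : (-1 : ℝ) ^ j * (c * ((-1 : ℝ) ^ j * ∏ i, r i))
        = ((-1 : ℝ) ^ j) ^ 2 * (c * ∏ i, r i) := by ring
    rw [this, ← pow_mul, mul_comm j 2, pow_mul]
    norm_num
    positivity
  -- big M
  obtain ⟨M, hMq, hM0, hMr⟩ : ∃ M : ℝ, q.eval M < 0 ∧ 0 < M ∧ ∀ i, r i < M := by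
    have hdegpos : 0 < (-q).degree := by
      rw [Polynomial.degree_eq_natDegree (by simpa using hqne), natDegree_neg, hqdeg]
      exact_mod_cast Nat.succ_pos j
    have htend : Filter.Tendsto (fun x => (-q).eval x) Filter.atTop Filter.atTop :=
      Polynomial.tendsto_atTop_of_leadingCoeff_nonneg _ hdegpos (by rw [hmonic]; norm_num)
    have h1 : ∀ᶠ x in Filter.atTop, 0 < (-q).eval x := htend.eventually_gt_atTop 0
    have h2 : ∀ᶠ x : ℝ in Filter.atTop, 0 < x := Filter.eventually_gt_atTop 0
    have h3 : ∀ᶠ x in Filter.atTop, ∀ i, r i < x :=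
      Filter.eventually_all.2 fun i => Filter.eventually_gt_atTop _
    obtain ⟨M, hMa, hMb, hMc⟩ := (h1.and (h2.and h3)).exists
    refine ⟨M, ?_, hMb, hMc⟩
    · have := hMa; rw [eval_neg] at this; linarith
  -- the interlacing points
  set y : ℕ → ℝ := fun i => if h : 0 < i ∧ i ≤ j then r ⟨i - 1, by omega⟩
    else if i = 0 then 0 else M with hy
  have hy0 : y 0 = 0 := by simp [hy]
  have hyr : ∀ (i : ℕ) (h : i < j), y (i + 1) = r ⟨i, h⟩ := by
    intro i h
    simp only [hy]
    rw [dif_pos ⟨Nat.succ_pos i, by omega⟩]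
    congr 1
  have hyM : ∀ i, j < i → y i = M := by
    intro i h
    simp only [hy]
    rw [dif_neg (by omega), if_neg (by omega)]
  have hynn : ∀ i, 0 ≤ y i := by
    intro i
    simp only [hy]
    split
    · exact le_of_lt (hrp _)
    · split
      · exact le_refl 0
      · exact le_of_lt hM0
  have hymono : ∀ i, i ≤ j → y i < y (i + 1) := by
    intro i hi
    rcases Nat.eq_zero_or_pos i with h0 | h0
    · subst h0
      rw [hy0]
      rcases Nat.eq_zero_or_pos j with hj | hj
      · rw [hyM 1 (by omega)]; exact hM0
      · rw [hyr 0 hj]; exact hrp _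
    · have hyi : y i = r ⟨i - 1, by omega⟩ := by
        simp only [hy]; rw [dif_pos ⟨h0, hi⟩]
      rcases lt_or_eq_of_le hi with h | h
      · rw [hyi, hyr i h]
        exact hr (by simp [Fin.lt_def]; omega)
      · subst h
        rw [hyi, hyM (i + 1) (by omega)]
        exact hMr _
  -- alternating signs
  have hsigny : ∀ i, i ≤ j + 1 → 0 < (-1 : ℝ) ^ (j + i) * q.eval (y i) := by
    intro i hi
    rcases Nat.eq_zero_or_pos i with h0 | h0
    · subst h0
      rw [hy0, Nat.add_zero]
      exact hsign0
    · rcases lt_or_eq_of_le hi with h | h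
      · have hyi : y i = r ⟨i - 1, by omega⟩ := by
          simp only [hy]; rw [dif_pos ⟨h0, by omega⟩]
        rw [hyi, show j + i = j + (i - 1) + 1 by omega]
        exact hsignrk ⟨i - 1, by omega⟩
      · subst h
        rw [hyM (j + 1) (by omega), show j + (j + 1) = 2 * j + 1 by omega,
          pow_succ, pow_mul]
        norm_num
        exact hMq
  -- roots via IVT
  have hroot : ∀ i : Fin (j + 1), ∃ x, y i.1 < x ∧ x < y (i.1 + 1) ∧ q.eval x = 0 := by
    intro i
    have hi : i.1 ≤ j := by omega
    have hA := hsigny i.1 (by omega)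
    have hB := hsigny (i.1 + 1) (by omega)
    have hyy : y i.1 ≤ y (i.1 + 1) := le_of_lt (hymono i.1 hi)
    have hcont : ContinuousOn (fun x => Polynomial.eval x q)
        (Set.Icc (y i.1) (y (i.1 + 1))) := (Polynomial.continuous q).continuousOn
    rw [show j + (i.1 + 1) = (j + i.1) + 1 by omega, pow_succ] at hB
    rcases neg_one_pow_eq_or ℝ (j + i.1) with he | he
    · rw [he, one_mul] at hA
      rw [he, one_mul] at hB
      have hB' : q.eval (y (i.1 + 1)) < 0 := by nlinarith
      obtain ⟨x, hx, hfx⟩ := intermediate_value_Ioo' hyy hcont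
        (Set.mem_Ioo.2 ⟨hB', hA⟩)
      exact ⟨x, hx.1, hx.2, hfx⟩
    · rw [he] at hA
      rw [he] at hB
      have hA' : q.eval (y i.1) < 0 := by nlinarith
      have hB' : 0 < q.eval (y (i.1 + 1)) := by nlinarith
      obtain ⟨x, hx, hfx⟩ := intermediate_value_Ioo hyy hcont
        (Set.mem_Ioo.2 ⟨hA', hB'⟩)
      exact ⟨x, hx.1, hx.2, hfx⟩
  choose s hs1 hs2 hs3 using hroot
  have hsmono : StrictMono s := by
    rw [Fin.strictMono_iff_lt_succ]
    intro i
    have h1 : s i.castSucc < y (i.1 + 1) := by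
      have := hs2 i.castSucc
      simpa using this
    have h2 : y (i.1 + 1) < s i.succ := by
      have := hs1 i.succ
      simpa using this
    exact lt_trans h1 h2
  have hspos : ∀ i, 0 < s i := fun i => lt_of_le_of_lt (hynn i.1) (hs1 i)
  -- multiset argument
  set T : Multiset ℝ := Multiset.map s Finset.univ.val with hT
  have hTnodup : T.Nodup := Multiset.Nodup.map hsmono.injective Finset.univ.nodup
  have hTcard : Multiset.card T = j + 1 := by simp [hT]
  have hqneg_ne : (-q : Polynomial ℝ) ≠ 0 := by simpa using hqne
  have hTle : T ≤ (-q).roots := by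
    rw [Multiset.le_iff_count]
    intro x
    by_cases hx : x ∈ T
    · rw [Multiset.count_eq_one_of_mem hTnodup hx]
      have hxr : x ∈ (-q).roots := by
        rw [mem_roots hqneg_ne]
        obtain ⟨i, -, rfl⟩ := Multiset.mem_map.1 hx
        simp [IsRoot, hs3 i]
      exact Multiset.one_le_count_iff_mem.2 hxr
    · rw [Multiset.count_eq_zero_of_notMem hx]
      exact Nat.zero_le _
  have hrootscard : Multiset.card (-q).roots ≤ j + 1 := by
    refine le_trans (Polynomial.card_roots' _) ?_
    rw [natDegree_neg, hqdeg]
  have hTeq : T = (-q).roots :=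
    Multiset.eq_of_le_of_card_le hTle (by rw [hTcard]; exact hrootscard)
  have hfinal := prod_multiset_X_sub_C_of_monic_of_roots_card_eq hmonic
    (by rw [← hTeq, hTcard, natDegree_neg, hqdeg])
  rw [← hTeq, hT, Multiset.map_map] at hfinal
  refine ⟨s, hsmono, hspos, ?_⟩
  have hprodq : ∏ i : Fin (j + 1), (X - C (s i)) = -q := by
    rw [Finset.prod_eq_multiset_prod]
    exact hfinal
  rw [hprodq, neg_neg]

lemma Q_eq_prod : ∀ (j : ℕ) (u : ℝ), 0 < u → ∃ s : Fin j → ℝ, StrictMono s ∧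
    (∀ i, 0 < s i) ∧ Q j u = C ((-1 : ℝ) ^ j) * ∏ i, (X - C (s i))
  | 0, u, hu => ⟨Fin.elim0, fun i => i.elim0, fun i => i.elim0, by simp [Q]⟩
  | (j + 1), u, hu => by
      obtain ⟨r, hrm, hrp, hQ⟩ := Q_eq_prod j (u + 1) (by linarith)
      obtain ⟨s, hsm, hsp, hstep⟩ := step j u hu r hrm hrp
      refine ⟨s, hsm, hsp, ?_⟩
      show (C u - X) * Q j (u + 1) + X * derivative (Q j (u + 1)) = _
      rw [hQ, derivative_C_mul]
      have h1 : (C u - X) * (C ((-1 : ℝ) ^ j) * ∏ i, (X - C (r i)))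
          + X * (C ((-1 : ℝ) ^ j) * derivative (∏ i, (X - C (r i))))
          = C ((-1 : ℝ) ^ j) * ((C u - X) * (∏ i, (X - C (r i)))
            + X * derivative (∏ i, (X - C (r i)))) := by ring
      rw [h1, hstep, pow_succ, map_mul, map_neg, map_one]
      ring

theorem stmt_4 (t : ℝ) (ht : 0 < t) (n : ℕ) (z : ℂ)
    (hz : ∑ k ∈ Finset.range (n + 1), (n.choose k : ℂ) * z ^ k / (rf t k : ℝ) = 0) :
    ∃ x : ℝ, x ≤ 0 ∧ z = (x : ℂ) := by
  obtain ⟨s, hsm, hsp, hQn⟩ := Q_eq_prod n t ht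
  have heval : Polynomial.aeval (-z) (Q n t) = 0 := by
    rw [Polynomial.aeval_eq_sum_range' (Nat.lt_succ_of_le (natDegree_Q_le n t))]
    have hterm : ∀ k ∈ Finset.range (n + 1),
        (Q n t).coeff k • (-z) ^ k
          = (rf t n : ℂ) * ((n.choose k : ℂ) * z ^ k / (rf t k : ℝ)) := by
      intro k hk
      have hk' : k ≤ n := by
        have := Finset.mem_range.1 hk; omega
      have hrel : rf t n = rf t k * rf (t + k) (n - k) := by
        rw [← rf_add]; congr 1; omega
      have hne : (rf t k : ℂ) ≠ 0 := by
        exact_mod_cast (rf_pos ht k).ne'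
      rw [coeff_Q, Complex.real_smul, hrel]
      push_cast
      rw [neg_pow]
      field_simp
      ring_nf
      have h2 : (-1 : ℂ) ^ (k * 2) = 1 := by
        rw [mul_comm, pow_mul]; norm_num
      rw [h2, mul_one]
    rw [Finset.sum_congr rfl hterm, ← Finset.mul_sum, hz, mul_zero]
  rw [hQn] at heval
  simp only [map_mul, map_prod, map_sub, aeval_X, aeval_C, map_pow, map_neg, map_one, Complex.coe_algebraMap] at heval
  have hne : ((-1 : ℂ)) ^ n ≠ 0 := by
    simp
  rcases mul_eq_zero.1 heval with h | h
  · exact absurd h hne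
  · obtain ⟨i, -, hi⟩ := Finset.prod_eq_zero_iff.1 h
    refine ⟨-s i, by linarith [hsp i], ?_⟩
    push_cast
    linear_combination -hi
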